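/- arXiv:nlin/0607056 — 5 statements merged into one kernel-verified Lean document; each statement's English description precedes it below -/
import Mathlib

section
/- For every f ∈ H there is a unique u ∈ D with λu - Lu = f, and the real number ⟨u, f⟩ is the least upper bound of the set { 2⟨f, φ⟩ - λ‖φ‖² - (1/λ)‖Lφ‖² : φ ∈ D }. -/
open scoped RealInnerProductSpace

/-- Let `H` be a real Hilbert space, `D ⊆ H` a dense linear subspace, and
`L : D → H` a linear, skew-symmetric map. Fix `λ > 0` and assume `λ - L` and `λ + L` are
surjective from `D` onto `H`. Then for every `f ∈ H` there is a unique `u ∈ D` with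
`λ u - L u = f`, and `⟨u, f⟩` is the least upper bound of
`{ 2⟨f, φ⟩ - λ‖φ‖² - (1/λ)‖Lφ‖² : φ ∈ D }`. -/
theorem stmt4 {H : Type*} [NormedAddCommGroup H] [InnerProductSpace ℝ H] [CompleteSpace H]
    (D : Submodule ℝ H) (hD : Dense (D : Set H))
    (L : D →ₗ[ℝ] H)
    (hskew : ∀ φ ψ : D, ⟪L φ, (ψ : H)⟫ = -⟪(φ : H), L ψ⟫)
    (l : ℝ) (hl : 0 < l)
    (hsurj₁ : ∀ f : H, ∃ u : D, l • (u : H) - L u = f)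
    (hsurj₂ : ∀ f : H, ∃ u : D, l • (u : H) + L u = f) :
    ∀ f : H,
      (∃! u : D, l • (u : H) - L u = f) ∧
      ∀ u : D, l • (u : H) - L u = f →
        IsLUB {r : ℝ | ∃ φ : D,
            r = 2 * ⟪f, (φ : H)⟫ - l * ‖(φ : H)‖ ^ 2 - (1 / l) * ‖L φ‖ ^ 2}
          ⟪(u : H), f⟫ := by
  -- self inner product with L vanishes
  have hLz : ∀ φ : D, ⟪(φ : H), L φ⟫ = 0 := by
    intro φ
    have h := hskew φ φ
    have h2 : ⟪L φ, (φ : H)⟫ = ⟪(φ : H), L φ⟫ := real_inner_comm _ _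
    linarith
  -- key identity
  have key : ∀ (u φ : D) (f : H), l • (u : H) - L u = f →
      2 * ⟪f, (φ : H)⟫ - l * ‖(φ : H)‖ ^ 2 - (1 / l) * ‖L φ‖ ^ 2
        = ⟪(u : H), f⟫ - (1 / l) * ‖l • ((u : H) - (φ : H)) - L φ‖ ^ 2 := by
    intro u φ f hf
    subst hf
    have e1 : ‖l • ((u : H) - (φ : H)) - L φ‖ ^ 2
        = l ^ 2 * ‖(u : H) - (φ : H)‖ ^ 2 - 2 * (l * ⟪(u : H) - (φ : H), L φ⟫)
          + ‖L φ‖ ^ 2 := by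
      rw [@norm_sub_sq_real, norm_smul, real_inner_smul_left]
      simp [mul_pow, abs_of_pos hl]
    have e2 : ‖(u : H) - (φ : H)‖ ^ 2
        = ‖(u : H)‖ ^ 2 - 2 * ⟪(u : H), (φ : H)⟫ + ‖(φ : H)‖ ^ 2 :=
      @norm_sub_sq_real _ _ _ _ _
    have e3 : ⟪(u : H) - (φ : H), L φ⟫ = ⟪(u : H), L φ⟫ - ⟪(φ : H), L φ⟫ :=
      inner_sub_left _ _ _
    have e4 : ⟪l • (u : H) - L u, (φ : H)⟫ = l * ⟪(u : H), (φ : H)⟫ - ⟪L u, (φ : H)⟫ := by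
      rw [inner_sub_left, real_inner_smul_left]
    have e5 : ⟪(u : H), l • (u : H) - L u⟫ = l * ‖(u : H)‖ ^ 2 - ⟪(u : H), L u⟫ := by
      rw [inner_sub_right, real_inner_smul_right, real_inner_self_eq_norm_sq]
    have e6 := hskew u φ
    have e7 := hLz φ
    have e8 := hLz u
    rw [e1, e2, e3, e4, e5, e6, e7, e8]
    field_simp
    ring
  intro f
  obtain ⟨u, hu⟩ := hsurj₁ f
  constructor
  · refine ⟨u, hu, ?_⟩
    intro v hv
    -- l • (v - u) = L (v - u)
    have hw : l • ((v : H) - (u : H)) = L (v - u) := by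
      have h' : l • (v : H) - l • (u : H) = L v - L u :=
        sub_eq_sub_iff_sub_eq_sub.mp (hv.trans hu.symm)
      rw [smul_sub, map_sub]
      exact h'
    have hz : l * ‖(v : H) - (u : H)‖ ^ 2 = 0 := by
      have h1 : ⟪((v - u : D) : H), l • ((v : H) - (u : H))⟫ = ⟪((v - u : D) : H), L (v - u)⟫ := by
        rw [hw]
      rw [hLz (v - u)] at h1
      have h2 : ((v - u : D) : H) = (v : H) - (u : H) := by push_cast; ring
      rw [h2, real_inner_smul_right, real_inner_self_eq_norm_sq] at h1
      linarith
    have h0 : ‖(v : H) - (u : H)‖ ^ 2 = 0 := (mul_eq_zero.mp hz).resolve_left hl.ne'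
    have h1 : ‖(v : H) - (u : H)‖ = 0 := pow_eq_zero_iff (n := 2) (by norm_num) |>.mp h0
    exact Subtype.ext (sub_eq_zero.mp (norm_eq_zero.mp h1))
  · intro u' hu'
    constructor
    · rintro r ⟨φ, rfl⟩
      rw [key u' φ f hu']
      have : 0 ≤ (1 / l) * ‖l • ((u' : H) - (φ : H)) - L φ‖ ^ 2 := by positivity
      linarith
    · intro b hb
      -- the sup is attained: pick φ₀ with l φ₀ + L φ₀ = l u'
      obtain ⟨φ₀, hφ₀⟩ := hsurj₂ (l • (u' : H))
      have hmem : ⟪(u' : H), f⟫ ∈ {r : ℝ | ∃ φ : D,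
          r = 2 * ⟪f, (φ : H)⟫ - l * ‖(φ : H)‖ ^ 2 - (1 / l) * ‖L φ‖ ^ 2} := by
        refine ⟨φ₀, ?_⟩
        rw [key u' φ₀ f hu']
        have hz : l • ((u' : H) - (φ₀ : H)) - L φ₀ = 0 := by
          rw [smul_sub, sub_sub, ← hφ₀, sub_self]
        rw [hz]
        simp
      exact hb hmem
end

section
/- There is an absolute constant C > 0 such that for every ρ > 0 and every λ ∈ (0,1], (2/λ³) 𝒢(λ) ≤ (1/λ) Z(λ^{-(1+ρ)}) + C ‖G‖² λ^{-4} e^{-λ^{-ρ}/2}. -/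
/-!
Since `Z = 2 ∫∫∫ h`, three integrations by parts give `∫₀^∞ e^{-λt} Z(t) dt = (2/λ³) 𝒢(λ)`.
Because `h(s - r) = ⟪P_s G, P_r G⟫`, the second primitive of `h` equals `½ ‖∫₀^t P_s G ds‖²`,
so `Z` is nondecreasing. Splitting the Laplace integral at `T = λ^{-(1+ρ)}` bounds the part over
`[0, T]` by `Z(T)/λ`, and the crude growth bound `|Z(t)| ≤ 16 ‖G‖² λ⁻³ e^{λt/2}` bounds the tail.
-/

open MeasureTheory Real Set Filter Topology
open scoped RealInnerProductSpace

noncomputable def primitive {E : Type*} [NormedAddCommGroup E] [NormedSpace ℝ E] (f : ℝ → E)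
    (t : ℝ) : E :=
  ∫ s in (0:ℝ)..t, f s

section Primitive

variable {E : Type*} [NormedAddCommGroup E] [NormedSpace ℝ E] {f : ℝ → E}

@[simp]
lemma primitive_zero : primitive f 0 = 0 :=
  intervalIntegral.integral_same

lemma continuous_primitive (hf : Continuous f) : Continuous (primitive f) :=
  intervalIntegral.continuous_primitive (fun _ _ => hf.intervalIntegrable _ _) 0

lemma hasDerivAt_primitive [CompleteSpace E] (hf : Continuous f) (t : ℝ) :
    HasDerivAt (primitive f) (f t) t :=
  intervalIntegral.integral_hasDerivAt_right (hf.intervalIntegrable _ _)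
    (hf.stronglyMeasurableAtFilter _ _) hf.continuousAt

lemma continuous_primitive_iterate (hf : Continuous f) (n : ℕ) :
    Continuous (primitive^[n] f) := by
  induction n with
  | zero => exact hf
  | succ n ih => rw [Function.iterate_succ_apply']; exact continuous_primitive ih

end Primitive

section ExponentialGrowth

variable {a b c : ℝ} {f : ℝ → ℝ}

lemma monotone_primitive (hf : Continuous f) (hf0 : ∀ t, 0 ≤ f t) : Monotone (primitive f) :=
  fun s t hst => by
    rw [← sub_nonneg, primitive, primitive,
      intervalIntegral.integral_interval_sub_left (hf.intervalIntegrable _ _)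
        (hf.intervalIntegrable _ _)]
    exact intervalIntegral.integral_nonneg hst fun u _ => hf0 u

lemma abs_primitive_le (ha : 0 < a) (hf : Continuous f)
    (hfc : ∀ t, 0 ≤ t → |f t| ≤ c * exp (a * t)) {t : ℝ} (ht : 0 ≤ t) :
    |primitive f t| ≤ c / a * exp (a * t) := by
  have hc : 0 ≤ c := by simpa using (abs_nonneg _).trans (hfc 0 le_rfl)
  have hexp : Continuous fun s => c * exp (a * s) := by fun_prop
  calc |primitive f t| ≤ ∫ s in (0:ℝ)..t, |f s| :=
        intervalIntegral.abs_integral_le_integral_abs ht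
    _ ≤ ∫ s in (0:ℝ)..t, c * exp (a * s) :=
        intervalIntegral.integral_mono_on ht (hf.abs.intervalIntegrable _ _)
          (hexp.intervalIntegrable _ _) fun s hs => hfc s hs.1
    _ = c / a * (exp (a * t) - 1) := by
        rw [intervalIntegral.integral_const_mul, intervalIntegral.integral_comp_mul_left _ ha.ne',
          integral_exp]
        simp [div_eq_mul_inv]
        ring
    _ ≤ c / a * exp (a * t) := by gcongr; linarith

lemma abs_primitive_iterate_le (ha : 0 < a) (hf : Continuous f)
    (hfc : ∀ t, 0 ≤ t → |f t| ≤ c * exp (a * t)) (n : ℕ) {t : ℝ} (ht : 0 ≤ t) :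
    |primitive^[n] f t| ≤ c / a ^ n * exp (a * t) := by
  induction n generalizing t with
  | zero => simpa using hfc t ht
  | succ n ih =>
    rw [Function.iterate_succ_apply', pow_succ, ← div_div]
    exact abs_primitive_le ha (continuous_primitive_iterate hf n) (fun s hs => ih hs) ht

lemma abs_exp_neg_mul_mul_le (hfc : ∀ t, 0 ≤ t → |f t| ≤ c * exp (a * t)) {t : ℝ}
    (ht : 0 ≤ t) :
    |exp (-b * t) * f t| ≤ c * exp (-(b - a) * t) := by
  rw [abs_mul, abs_of_pos (exp_pos _)]
  calc exp (-b * t) * |f t| ≤ exp (-b * t) * (c * exp (a * t)) := by gcongr; exact hfc t ht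
    _ = c * exp (-(b - a) * t) := by rw [mul_left_comm, ← exp_add]; ring_nf

lemma integrableOn_exp_neg_mul_mul (hab : a < b) (hf : Continuous f)
    (hfc : ∀ t, 0 ≤ t → |f t| ≤ c * exp (a * t)) :
    IntegrableOn (fun t => exp (-b * t) * f t) (Ioi 0) := by
  refine Integrable.mono' ((exp_neg_integrableOn_Ioi 0 (sub_pos.2 hab)).const_mul c)
    (by fun_prop : Continuous _).aestronglyMeasurable ?_
  filter_upwards [ae_restrict_mem measurableSet_Ioi] with t ht
  exact abs_exp_neg_mul_mul_le hfc ht.le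

lemma integral_exp_neg_mul_primitive (ha : 0 < a) (hab : a < b) (hf : Continuous f)
    (hfc : ∀ t, 0 ≤ t → |f t| ≤ c * exp (a * t)) :
    ∫ t in Ioi 0, exp (-b * t) * primitive f t = 1 / b * ∫ t in Ioi 0, exp (-b * t) * f t := by
  have hb : 0 < b := ha.trans hab
  have hF := continuous_primitive hf
  have hFc : ∀ t, 0 ≤ t → |primitive f t| ≤ c / a * exp (a * t) :=
    fun t => abs_primitive_le ha hf hfc
  set u : ℝ → ℝ := fun t => -exp (-b * t) / b
  have hu : ∀ t, HasDerivAt u (exp (-b * t)) t := fun t => by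
    have hlin : HasDerivAt (fun t => -b * t) (-b) t := by
      simpa using (hasDerivAt_id t).const_mul (-b)
    exact (hlin.exp.fun_neg.div_const b).congr_deriv (by field_simp)
  have huF : ∀ t, 0 ≤ t → |u t * primitive f t| ≤ c / a / b * exp (-(b - a) * t) := by
    intro t ht
    have hu' : u t * primitive f t = -(exp (-b * t) * primitive f t) / b := by simp only [u]; ring
    rw [hu', abs_div, abs_neg, abs_of_pos hb, div_le_iff₀ hb]
    calc _ ≤ c / a * exp (-(b - a) * t) := abs_exp_neg_mul_mul_le hFc ht
      _ = _ := by field_simp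
  have hdecay : Tendsto (fun t => c / a / b * exp (-(b - a) * t)) atTop (𝓝 0) := by
    simpa using ((tendsto_exp_atBot.comp
      (tendsto_id.const_mul_atTop_of_neg (by linarith : -(b - a) < 0))).const_mul (c / a / b))
  have hparts := integral_Ioi_mul_deriv_eq_deriv_mul (a := 0) (a' := 0) (b' := 0)
    (fun t _ => hu t) (fun t _ => hasDerivAt_primitive hf t) ?_
    (integrableOn_exp_neg_mul_mul hab hF hFc) ?_ ?_
  · have hrw : (fun t => u t * f t) = fun t => -(1 / b) * (exp (-b * t) * f t) := by
      funext t; simp only [u]; ring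
    rw [hrw, integral_const_mul] at hparts
    linarith
  · have hint : IntegrableOn (fun t => exp (-b * t) * f t / -b) (Ioi 0) :=
      (integrableOn_exp_neg_mul_mul hab hf hfc).div_const (-b)
    convert hint using 2 with t
    simp only [u, Pi.mul_apply]
    ring
  · have hcont : Continuous (u * primitive f) := by fun_prop
    simpa [u] using (hcont.tendsto 0).mono_left nhdsWithin_le_nhds
  · exact squeeze_zero_norm' (eventually_atTop.2 ⟨0, fun t ht => huF t ht⟩) hdecay

lemma integral_exp_neg_mul_primitive_iterate (ha : 0 < a) (hab : a < b) (hf : Continuous f)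
    (hfc : ∀ t, 0 ≤ t → |f t| ≤ c * exp (a * t)) (n : ℕ) :
    ∫ t in Ioi 0, exp (-b * t) * primitive^[n] f t =
      (1 / b) ^ n * ∫ t in Ioi 0, exp (-b * t) * f t := by
  induction n with
  | zero => simp
  | succ n ih =>
    rw [Function.iterate_succ_apply', integral_exp_neg_mul_primitive ha hab
      (continuous_primitive_iterate hf n) (fun t => abs_primitive_iterate_le ha hf hfc n), ih,
      pow_succ']
    ring

lemma setIntegral_Ioc_exp_neg_mul_le (hb : 0 < b) {T : ℝ} (hf : Continuous f)
    (hmono : MonotoneOn f (Icc 0 T)) (hfT : 0 ≤ f T) :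
    ∫ t in Ioc 0 T, exp (-b * t) * f t ≤ 1 / b * f T := by
  have hexp : IntegrableOn (fun t => exp (-b * t)) (Ioi 0) := exp_neg_integrableOn_Ioi 0 hb
  calc ∫ t in Ioc 0 T, exp (-b * t) * f t ≤ ∫ t in Ioc 0 T, exp (-b * t) * f T :=
        setIntegral_mono_on (by fun_prop : Continuous _).integrableOn_Ioc
          (by fun_prop : Continuous _).integrableOn_Ioc measurableSet_Ioc fun t ht =>
          mul_le_mul_of_nonneg_left
            (hmono (Ioc_subset_Icc_self ht) (right_mem_Icc.2 (ht.1.le.trans ht.2)) ht.2)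
            (exp_pos _).le
    _ = (∫ t in Ioc 0 T, exp (-b * t)) * f T := integral_mul_const _ _
    _ ≤ (∫ t in Ioi 0, exp (-b * t)) * f T :=
        mul_le_mul_of_nonneg_right (setIntegral_mono_set hexp
          (Eventually.of_forall fun t => (exp_pos _).le) Ioc_subset_Ioi_self.eventuallyLE) hfT
    _ = 1 / b * f T := by
        rw [integral_exp_mul_Ioi (by linarith) 0]
        field_simp
        simp

lemma setIntegral_Ioi_exp_neg_mul_le (hab : a < b) (hf : Continuous f)
    (hfc : ∀ t, 0 ≤ t → |f t| ≤ c * exp (a * t)) {T : ℝ} (hT : 0 ≤ T) :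
    ∫ t in Ioi T, exp (-b * t) * f t ≤ c * exp (-(b - a) * T) / (b - a) := by
  have hba : -(b - a) < 0 := by linarith
  calc ∫ t in Ioi T, exp (-b * t) * f t ≤ ∫ t in Ioi T, c * exp (-(b - a) * t) :=
        setIntegral_mono_on
          ((integrableOn_exp_neg_mul_mul hab hf hfc).mono_set (Ioi_subset_Ioi hT))
          ((integrableOn_exp_mul_Ioi hba T).const_mul c) measurableSet_Ioi fun t ht =>
          (le_abs_self _).trans (abs_exp_neg_mul_mul_le hfc (hT.trans ht.le))
    _ = c * exp (-(b - a) * T) / (b - a) := by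
        rw [integral_const_mul, integral_exp_mul_Ioi hba]
        field_simp

lemma integral_exp_neg_mul_le (ha : 0 < a) (hab : a < b) (hf : Continuous f)
    (hfc : ∀ t, 0 ≤ t → |f t| ≤ c * exp (a * t)) {T : ℝ} (hT : 0 ≤ T)
    (hmono : MonotoneOn f (Icc 0 T)) (hf0 : 0 ≤ f 0) :
    ∫ t in Ioi 0, exp (-b * t) * f t ≤ 1 / b * f T + c * exp (-(b - a) * T) / (b - a) := by
  have hint := integrableOn_exp_neg_mul_mul hab hf hfc
  rw [← Ioc_union_Ioi_eq_Ioi hT, setIntegral_union (Ioc_disjoint_Ioi le_rfl) measurableSet_Ioi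
    (hint.mono_set Ioc_subset_Ioi_self) (hint.mono_set (Ioi_subset_Ioi hT))]
  exact add_le_add
    (setIntegral_Ioc_exp_neg_mul_le (ha.trans hab) hf hmono
      (hf0.trans (hmono (left_mem_Icc.2 hT) (right_mem_Icc.2 hT) hT)))
    (setIntegral_Ioi_exp_neg_mul_le hab hf hfc hT)

end ExponentialGrowth

section Hilbert

variable {H : Type*} [NormedAddCommGroup H] [InnerProductSpace ℝ H]

lemma inner_apply_apply_eq_inner_apply_sub (P : ℝ → H ≃ₗᵢ[ℝ] H)
    (hPadd : ∀ s t x, P (s + t) x = P s (P t x)) (G : H) (s r : ℝ) :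
    ⟪P s G, P r G⟫ = ⟪P (s - r) G, G⟫ :=
  calc ⟪P s G, P r G⟫ = ⟪P r (P (s - r) G), P r G⟫ := by rw [← hPadd, add_sub_cancel]
    _ = ⟪P (s - r) G, G⟫ := (P r).inner_map_map _ _

lemma abs_inner_apply_le_norm_sq (P : ℝ → H ≃ₗᵢ[ℝ] H) (G : H) (s : ℝ) :
    |⟪P s G, G⟫| ≤ ‖G‖ ^ 2 :=
  (abs_real_inner_le_norm _ _).trans_eq (by rw [(P s).norm_map, sq])

lemma primitive_integral_inner_eq [CompleteSpace H] {u : ℝ → H} (hu : Continuous u) (t : ℝ) :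
    primitive (fun s => ∫ r in (0:ℝ)..s, ⟪u s, u r⟫) t = ‖primitive u t‖ ^ 2 / 2 := by
  have hinner : ∀ s, ∫ r in (0:ℝ)..s, ⟪u s, u r⟫ = ⟪primitive u s, u s⟫ := fun s => by
    rw [real_inner_comm]
    exact (innerSL ℝ (u s)).intervalIntegral_comp_comm (hu.intervalIntegrable _ _)
  have hderiv : ∀ s, HasDerivAt (fun s => ‖primitive u s‖ ^ 2 / 2) ⟪primitive u s, u s⟫ s :=
    fun s => ((hasDerivAt_primitive hu s).norm_sq.div_const 2).congr_deriv (by ring)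
  rw [primitive, intervalIntegral.integral_congr fun s _ => hinner s,
    intervalIntegral.integral_eq_sub_of_hasDerivAt (fun s _ => hderiv s)
      (((continuous_primitive hu).inner hu).intervalIntegrable _ _)]
  simp

lemma primitive_primitive_inner_apply_nonneg [CompleteSpace H] (P : ℝ → H ≃ₗᵢ[ℝ] H)
    (hPadd : ∀ s t x, P (s + t) x = P s (P t x)) (hPcont : ∀ x, Continuous fun t => P t x)
    (G : H) (t : ℝ) :
    0 ≤ primitive (primitive fun s => ⟪P s G, G⟫) t := by
  have hcorr : primitive (fun s => ⟪P s G, G⟫) = fun s => ∫ r in (0:ℝ)..s, ⟪P s G, P r G⟫ := by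
    funext s
    simp_rw [inner_apply_apply_eq_inner_apply_sub P hPadd, primitive,
      intervalIntegral.integral_comp_sub_left (fun r => ⟪P r G, G⟫), sub_zero, sub_self]
  rw [hcorr, primitive_integral_inner_eq (hPcont G)]
  positivity

end Hilbert

theorem stmt7_general {H : Type*} [NormedAddCommGroup H] [InnerProductSpace ℝ H] [CompleteSpace H]
    (P : ℝ → H ≃ₗᵢ[ℝ] H)
    (hPadd : ∀ s t : ℝ, ∀ x : H, P (s + t) x = P s (P t x))
    (hPcont : ∀ x : H, Continuous fun t : ℝ => P t x)
    (G : H)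
    (Z : ℝ → ℝ)
    (hZ : ∀ t : ℝ, Z t =
      2 * ∫ s in (0:ℝ)..t, ∫ s₁ in (0:ℝ)..s, ∫ s₂ in (0:ℝ)..s₁, ⟪P s₂ G, G⟫)
    (𝒢 : ℝ → ℝ)
    (h𝒢 : ∀ l : ℝ, 𝒢 l = ∫ s in Set.Ioi (0:ℝ), Real.exp (-l * s) * ⟪P s G, G⟫) :
    ∃ C > (0:ℝ), ∀ ρ > (0:ℝ), ∀ l ∈ Set.Ioc (0:ℝ) 1,
      (2 / l ^ 3) * 𝒢 l ≤
        (1 / l) * Z (l ^ (-(1 + ρ))) +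
          C * ‖G‖ ^ 2 * l ^ (-4 : ℝ) * Real.exp (-(l ^ (-ρ)) / 2) := by
  refine ⟨32, by norm_num, fun ρ _ l ⟨hl, _⟩ => ?_⟩
  set h : ℝ → ℝ := fun s => ⟪P s G, G⟫
  have hZ3 : Z = fun t => 2 * primitive^[3] h t := funext hZ
  have hh : Continuous h := (hPcont G).inner continuous_const
  have hhG : ∀ t, 0 ≤ t → |h t| ≤ ‖G‖ ^ 2 * exp (l / 2 * t) := fun t ht =>
    (abs_inner_apply_le_norm_sq P G t).trans
      (le_mul_of_one_le_right (by positivity) (one_le_exp (by positivity)))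
  have hZc : Continuous Z := hZ3 ▸ (continuous_primitive_iterate hh 3).const_mul 2
  have hZG : ∀ t, 0 ≤ t → |Z t| ≤ 2 * ‖G‖ ^ 2 / (l / 2) ^ 3 * exp (l / 2 * t) := fun t ht => by
    rw [hZ3, abs_mul, abs_two, mul_div_assoc, mul_assoc]
    gcongr
    exact abs_primitive_iterate_le (by positivity) hh hhG 3 ht
  have hlaplace : ∫ t in Ioi 0, exp (-l * t) * Z t = 2 / l ^ 3 * 𝒢 l := by
    simp_rw [hZ3, mul_left_comm _ (2:ℝ)]
    rw [integral_const_mul, integral_exp_neg_mul_primitive_iterate (by positivity)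
      (by linarith : l / 2 < l) hh hhG 3, h𝒢]
    ring
  have hmono : Monotone Z :=
    hZ3 ▸ (monotone_primitive (continuous_primitive (continuous_primitive hh))
      (primitive_primitive_inner_apply_nonneg P hPadd hPcont G)).const_mul zero_le_two
  have hlT : l * l ^ (-(1 + ρ)) = l ^ (-ρ) := by
    rw [← rpow_one_add' hl.le (by linarith)]; ring_nf
  have hl4 : l ^ (-4 : ℝ) = 1 / l ^ 4 := by
    rw [rpow_neg hl.le, one_div]; norm_cast
  calc 2 / l ^ 3 * 𝒢 l = ∫ t in Ioi 0, exp (-l * t) * Z t := hlaplace.symm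
    _ ≤ 1 / l * Z (l ^ (-(1 + ρ))) + 2 * ‖G‖ ^ 2 / (l / 2) ^ 3 *
          exp (-(l - l / 2) * l ^ (-(1 + ρ))) / (l - l / 2) :=
        integral_exp_neg_mul_le (by positivity) (by linarith) hZc hZG (by positivity)
          (hmono.monotoneOn _)
          (by simp [hZ])
    _ = _ := by
        rw [hl4, show -(l - l / 2) * l ^ (-(1 + ρ)) = -(l ^ (-ρ)) / 2 by rw [← hlT]; ring]
        field_simp
        ring

/-- Let `(P_t)` be a strongly continuous one-parameter group of orthogonal
operators on a real Hilbert space `H`, `G ∈ H`, `h(s) = ⟨P_s G, G⟩`,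
`Z(t) = 2∫₀^t∫₀^s∫₀^{s₁} h(s₂) ds₂ ds₁ ds` and `𝒢(λ) = ∫₀^∞ e^{-λs} h(s) ds`.
There is an absolute constant `C > 0` such that for every `ρ > 0` and every `λ ∈ (0,1]`,
`(2/λ³)𝒢(λ) ≤ (1/λ) Z(λ^{-(1+ρ)}) + C ‖G‖² λ^{-4} e^{-λ^{-ρ}/2}`. -/
theorem stmt7 {H : Type*} [NormedAddCommGroup H] [InnerProductSpace ℝ H] [CompleteSpace H]
    (P : ℝ → H ≃ₗᵢ[ℝ] H)
    (hP0 : ∀ x : H, P 0 x = x)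
    (hPadd : ∀ s t : ℝ, ∀ x : H, P (s + t) x = P s (P t x))
    (hPcont : ∀ x : H, Continuous fun t : ℝ => P t x)
    (G : H)
    (Z : ℝ → ℝ)
    (hZ : ∀ t : ℝ, Z t =
      2 * ∫ s in (0:ℝ)..t, ∫ s₁ in (0:ℝ)..s, ∫ s₂ in (0:ℝ)..s₁, ⟪P s₂ G, G⟫)
    (𝒢 : ℝ → ℝ)
    (h𝒢 : ∀ l : ℝ, 𝒢 l = ∫ s in Set.Ioi (0:ℝ), Real.exp (-l * s) * ⟪P s G, G⟫) :
    ∃ C > (0:ℝ), ∀ ρ > (0:ℝ), ∀ l ∈ Set.Ioc (0:ℝ) 1,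
      (2 / l ^ 3) * 𝒢 l ≤
        (1 / l) * Z (l ^ (-(1 + ρ))) +
          C * ‖G‖ ^ 2 * l ^ (-4 : ℝ) * Real.exp (-(l ^ (-ρ)) / 2) :=
  stmt7_general P hPadd hPcont G Z hZ 𝒢 h𝒢
end

section
/- Let d ≥ 2 be an integer and α ∈ (1/2, 1). There exists a constant C > 0 such that for all λ ∈ (0,1] and all δ ∈ [0,1], λ ∫_{{k ∈ ℝᵈ : |k| ≤ 1}} (λ² + k₁² + δ²|k|²)^{-1} |k|^{-(2α+d-2)} dk ≥ C λ^{1-2α}, where k₁ denotes the first coordinate of k. -/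
/-!
On the ball `|k| ≤ λ` the denominator is at most `3λ²` and `|k|^{-s} ≥ λ^{-s}`, where
`s = 2α + d - 2`; since that ball has volume `λ^d |B₁|`, the integral is at least
`λ^{-2-s+d} |B₁| / 3 = λ^{-2α} |B₁| / 3`. Integrability on the unit ball comes from `s < d`.
-/

open MeasureTheory Metric Set

section HaarMeasure

variable {E : Type*} [NormedAddCommGroup E] [NormedSpace ℝ E] [FiniteDimensional ℝ E]
  [MeasurableSpace E] [BorelSpace E] {μ : Measure E} [μ.IsAddHaarMeasure]

lemma integrableOn_closedBall_of_norm_le_rpow [Nontrivial E] {f : E → ℝ} {C s R : ℝ}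
    (hs : s < Module.finrank ℝ E) (h_decay : ∀ x, ‖f x‖ ≤ C * ‖x‖ ^ (-s))
    (h_meas : AEStronglyMeasurable f μ) :
    IntegrableOn f (closedBall 0 R) μ :=
  (locallyIntegrable_of_norm_le_rpow Module.finrank_pos hs (.of_forall h_decay)
    h_meas).integrableOn_isCompact (isCompact_closedBall 0 R)

lemma mul_measureReal_closedBall_le_setIntegral [Nontrivial E] {f : E → ℝ} {c r : ℝ}
    (hf : IntegrableOn f (closedBall 0 r) μ) (hc : ∀ x ∈ closedBall 0 r, x ≠ 0 → c ≤ f x) :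
    c * μ.real (closedBall 0 r) ≤ ∫ x in closedBall 0 r, f x ∂μ := by
  have h_punct : (closedBall 0 r \ {0} : Set E) =ᵐ[μ] closedBall 0 r :=
    sdiff_null_ae_eq_self (measure_singleton 0)
  rw [← measureReal_congr h_punct, ← setIntegral_congr_set h_punct]
  exact setIntegral_ge_of_const_le_real (measurableSet_closedBall.diff (measurableSet_singleton 0))
    ((measure_mono sdiff_subset).trans_lt measure_closedBall_lt_top).ne (fun x hx ↦ hc x hx.1 hx.2)
    (hf.mono_set sdiff_subset)

end HaarMeasure

lemma inv_mul_rpow_le_inv_add_mul_rpow {l δ a ρ s : ℝ} (hl : 0 < l) (hδ : δ ^ 2 ≤ 1)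
    (ha : |a| ≤ ρ) (hρ0 : 0 < ρ) (hρl : ρ ≤ l) (hs : 0 ≤ s) :
    (3 * l ^ 2)⁻¹ * l ^ (-s) ≤ (l ^ 2 + a ^ 2 + δ ^ 2 * ρ ^ 2)⁻¹ * ρ ^ (-s) := by
  have hρ2 : ρ ^ 2 ≤ l ^ 2 := pow_le_pow_left₀ hρ0.le hρl 2
  have ha2 : a ^ 2 ≤ ρ ^ 2 := sq_le_sq' (abs_le.mp ha).1 (abs_le.mp ha).2
  have hδρ : δ ^ 2 * ρ ^ 2 ≤ l ^ 2 := by nlinarith [sq_nonneg δ]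
  gcongr ?_ * ?_
  · exact inv_anti₀ (by positivity) (by linarith)
  · exact Real.rpow_le_rpow_of_nonpos hρ0 hρl (neg_nonpos.mpr hs)

section EuclideanKernel

variable {d : ℕ} (i : Fin d) {l δ s : ℝ}

lemma integrableOn_closedBall_inv_add_mul_rpow_norm (hl : 0 < l)
    (hs : s < d) (R : ℝ) :
    IntegrableOn (fun k : EuclideanSpace ℝ (Fin d) ↦
      (l ^ 2 + k i ^ 2 + δ ^ 2 * ‖k‖ ^ 2)⁻¹ * ‖k‖ ^ (-s)) (closedBall 0 R) := by
  have : Nonempty (Fin d) := ⟨i⟩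
  refine integrableOn_closedBall_of_norm_le_rpow (C := (l ^ 2)⁻¹)
    (by rwa [finrank_euclideanSpace_fin]) (fun k ↦ ?_) (by fun_prop)
  rw [Real.norm_of_nonneg (by positivity)]
  refine mul_le_mul_of_nonneg_right (inv_anti₀ (by positivity) ?_) (by positivity)
  nlinarith [sq_nonneg (k i), sq_nonneg (δ * ‖k‖)]

lemma mul_rpow_le_setIntegral_closedBall_inv_add_mul_rpow_norm (hl : 0 < l) (hδ : δ ^ 2 ≤ 1)
    (hs0 : 0 ≤ s) (hs : s < d) :
    (3 * l ^ 2)⁻¹ * l ^ (-s) * (l ^ d * volume.real (ball (0 : EuclideanSpace ℝ (Fin d)) 1)) ≤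
      ∫ k in closedBall (0 : EuclideanSpace ℝ (Fin d)) l,
        (l ^ 2 + k i ^ 2 + δ ^ 2 * ‖k‖ ^ 2)⁻¹ * ‖k‖ ^ (-s) := by
  have : Nonempty (Fin d) := ⟨i⟩
  have h_vol := Measure.addHaar_real_closedBall volume (0 : EuclideanSpace ℝ (Fin d)) hl.le
  rw [finrank_euclideanSpace_fin] at h_vol
  rw [← h_vol]
  refine mul_measureReal_closedBall_le_setIntegral
    (integrableOn_closedBall_inv_add_mul_rpow_norm i hl hs l) fun k hk hk0 ↦ ?_
  exact inv_mul_rpow_le_inv_add_mul_rpow hl hδ (PiLp.norm_apply_le k i) (norm_pos_iff.mpr hk0)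
    (mem_closedBall_zero_iff.mp hk) hs0

end EuclideanKernel

/-- Let `d ≥ 2` and `α ∈ (1/2, 1)`. There exists `C > 0` such that for all
`λ ∈ (0,1]` and `δ ∈ [0,1]`,
`λ ∫_{|k| ≤ 1} (λ² + k₁² + δ²|k|²)⁻¹ |k|^{-(2α+d-2)} dk ≥ C λ^{1-2α}`. -/
theorem stmt10 (d : ℕ) (hd : 2 ≤ d) (α : ℝ) (hα1 : 1 / 2 < α) (hα2 : α < 1) :
    ∃ C > (0:ℝ), ∀ l ∈ Set.Ioc (0:ℝ) 1, ∀ δ ∈ Set.Icc (0:ℝ) 1,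
      C * l ^ (1 - 2 * α) ≤
        l * ∫ k in {k : EuclideanSpace ℝ (Fin d) | ‖k‖ ≤ 1},
          (l ^ 2 + (k ⟨0, by omega⟩) ^ 2 + δ ^ 2 * ‖k‖ ^ 2)⁻¹ *
            ‖k‖ ^ (-(2 * α + (d : ℝ) - 2)) := by
  set s := 2 * α + (d : ℝ) - 2
  have hd' : (2 : ℝ) ≤ d := mod_cast hd
  set V := volume.real (ball (0 : EuclideanSpace ℝ (Fin d)) 1)
  have : Nonempty (Fin d) := ⟨⟨0, by omega⟩⟩
  have hV : 0 < V := ENNReal.toReal_pos (measure_ball_pos _ _ one_pos).ne' measure_ball_lt_top.ne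
  refine ⟨V / 3, by positivity, ?_⟩
  rintro l ⟨hl0, hl1⟩ δ ⟨hδ0, hδ1⟩
  rw [show {k : EuclideanSpace ℝ (Fin d) | ‖k‖ ≤ 1} = closedBall 0 1 by ext; simp]
  calc V / 3 * l ^ (1 - 2 * α) = l * ((3 * l ^ 2)⁻¹ * l ^ (-s) * (l ^ d * V)) := by
        rw [show 1 - 2 * α = 1 - 2 + -s + d by ring, Real.rpow_add hl0, Real.rpow_add hl0,
          Real.rpow_sub hl0, Real.rpow_one, Real.rpow_two, Real.rpow_natCast]
        field_simp
    _ ≤ _ := by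
        refine mul_le_mul_of_nonneg_left ?_ hl0.le
        refine (mul_rpow_le_setIntegral_closedBall_inv_add_mul_rpow_norm _ hl0 (by nlinarith)
          (by linarith) (by linarith)).trans (setIntegral_mono_set ?_ ?_ ?_)
        · exact integrableOn_closedBall_inv_add_mul_rpow_norm _ hl0 (by linarith) 1
        · exact .of_forall fun k ↦ by positivity
        · exact (closedBall_subset_closedBall hl1).eventuallyLE
end

section
/- Let d ≥ 2 be an integer, α ∈ (1/2, 1), v ∈ ℝᵈ with |v| = 1, and 𝓗 > 0. Then there exists a constant C > 0 such that for all λ ∈ (0,1] and all δ ∈ (0,1], ∫_{ℝᵈ} { λ + (1/λ)[(v·k)² + δ²|k|²𝓗] }^{-1} a(|k|) |k|^{-(2α+d-2)} dk ≥ C λ^{1-2α}. -/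
/-!
Fix `ρ ≤ 1` with `ρ 𝓗 ≤ 1` and `a ≥ 1/2` on `[0, ρ)`. On the ball `‖k‖ < ρλ` both `(v·k)²` and
`δ²‖k‖²𝓗` are at most `λ²`, so the denominator is at most `3λ` and the integrand is at least
`(6λ)⁻¹ (ρλ)^p` with `p = -(2α + d - 2) ≤ 0`. Integrating this constant over the ball gives
`(6λ)⁻¹ (ρλ)^(p + d) |B₁| = 6⁻¹ ρ^(2 - 2α) |B₁| λ^(1 - 2α)`. The integrand is nonnegative and,
as `p > -d`, integrable, so its integral dominates the integral over the ball.
-/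

open MeasureTheory Set Metric Module Filter Topology
open scoped RealInnerProductSpace

section HaarIntegrals

variable {E F : Type*} [NormedAddCommGroup E] [NormedSpace ℝ E] [FiniteDimensional ℝ E]
  [MeasurableSpace E] [BorelSpace E] [NormedAddCommGroup F] (μ : Measure E) [μ.IsAddHaarMeasure]

lemma integrable_of_norm_le_rpow_of_eq_zero_of_lt (hE : 1 ≤ finrank ℝ E) {f : E → F}
    {C β R : ℝ} (hβ : β < finrank ℝ E) (h_decay : ∀ x, ‖f x‖ ≤ C * ‖x‖ ^ (-β))
    (h_supp : ∀ x, R < ‖x‖ → f x = 0) (h_meas : AEStronglyMeasurable f μ) :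
    Integrable f μ := by
  have h_sub : Function.support f ⊆ ball 0 (R + 1) := fun x hx ↦ by
    have : ‖x‖ ≤ R := not_lt.mp fun h ↦ hx (h_supp x h)
    rw [mem_ball_zero_iff]
    linarith
  rw [← integrableOn_iff_integrable_of_support_subset h_sub]
  exact integrableOn_ball_of_norm_le_rpow hE hβ (ae_of_all _ h_decay) h_meas

lemma mul_measureReal_ball_le_integral [Nontrivial E] {f : E → ℝ} (hf : Integrable f μ)
    (hf0 : ∀ x, 0 ≤ f x) {c T : ℝ} (hT : 0 < T) (hc : ∀ x ∈ ball 0 T \ {0}, c ≤ f x) :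
    c * (T ^ finrank ℝ E * μ.real (ball 0 1)) ≤ ∫ x, f x ∂μ := by
  have h_vol : μ.real (ball 0 T \ {0}) = T ^ finrank ℝ E * μ.real (ball 0 1) := by
    rw [measureReal_sdiff_null (by simp [measureReal_def]) (by simp), measureReal_def,
      Measure.addHaar_ball_of_pos μ 0 hT,
      ENNReal.toReal_mul, ENNReal.toReal_ofReal (by positivity), ← measureReal_def]
  calc c * (T ^ finrank ℝ E * μ.real (ball 0 1))
      = c * μ.real (ball 0 T \ {0}) := by rw [h_vol]
    _ ≤ ∫ x in ball 0 T \ {0}, f x ∂μ :=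
      setIntegral_ge_of_const_le_real (measurableSet_ball.diff (measurableSet_singleton 0))
        (ne_top_of_le_ne_top measure_ball_lt_top.ne (measure_mono sdiff_subset)) hc hf.integrableOn
    _ ≤ ∫ x, f x ∂μ := setIntegral_le_integral hf (ae_of_all _ hf0)

end HaarIntegrals

lemma eventually_nhdsGT_forall_lt_le {a : ℝ → ℝ} {c : ℝ} (ha : ContinuousAt a 0) (hc : c < a 0) :
    ∀ᶠ ρ in 𝓝[>] 0, ∀ r, 0 ≤ r → r < ρ → c ≤ a r := by
  obtain ⟨ε, hε, ha_gt⟩ := Metric.eventually_nhds_iff.mp (ha.eventually (lt_mem_nhds hc))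
  filter_upwards [Ioo_mem_nhdsGT hε] with ρ hρ r hr hrρ
  refine (ha_gt ?_).le
  rw [Real.dist_eq, sub_zero, abs_of_nonneg hr]
  exact hrρ.trans hρ.2

lemma inv_mul_mul_rpow_mul_pow {ρ l : ℝ} (hρ : 0 < ρ) (hl : 0 < l) (c β B : ℝ) (n : ℕ) :
    (c * l)⁻¹ * (ρ * l) ^ (-β) * ((ρ * l) ^ n * B) = c⁻¹ * ρ ^ (n - β) * B * l ^ (n - β - 1) := by
  calc (c * l)⁻¹ * (ρ * l) ^ (-β) * ((ρ * l) ^ n * B)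
      = c⁻¹ * B * l⁻¹ * ((ρ * l) ^ (-β) * (ρ * l) ^ (n : ℝ)) := by rw [Real.rpow_natCast]; ring
    _ = c⁻¹ * B * l⁻¹ * (ρ ^ (n - β) * l ^ (n - β)) := by
      rw [← Real.rpow_add (mul_pos hρ hl), Real.mul_rpow hρ.le hl.le, neg_add_eq_sub]
    _ = c⁻¹ * ρ ^ (n - β) * B * l ^ (n - β - 1) := by rw [Real.rpow_sub_one hl.ne']; ring

section Symbol

variable {E : Type*} [NormedAddCommGroup E] [InnerProductSpace ℝ E] {v k : E} {H l δ : ℝ}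

noncomputable def symbol (v : E) (H l δ : ℝ) (k : E) : ℝ :=
  l + (1 / l) * (⟪v, k⟫ ^ 2 + δ ^ 2 * ‖k‖ ^ 2 * H)

lemma le_symbol (hH : 0 ≤ H) (hl : 0 ≤ l) : l ≤ symbol v H l δ k :=
  le_add_of_nonneg_right (by positivity)

lemma symbol_pos (hH : 0 ≤ H) (hl : 0 < l) : 0 < symbol v H l δ k :=
  hl.trans_le (le_symbol hH hl.le)

lemma symbol_inv_mul_nonneg (hH : 0 ≤ H) (hl : 0 < l) {a : ℝ → ℝ}
    (ha : ∀ r, 0 ≤ r → 0 ≤ a r) (p : ℝ) : 0 ≤ (symbol v H l δ k)⁻¹ * (a ‖k‖ * ‖k‖ ^ p) := by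
  have := symbol_pos (v := v) (δ := δ) (k := k) hH hl
  have := ha _ (norm_nonneg k)
  positivity

lemma symbol_le_three_mul (hv : ‖v‖ ≤ 1) (hl : 0 < l) (hδ : δ ^ 2 ≤ 1)
    (hk : ‖k‖ ≤ l) (hkH : ‖k‖ ^ 2 * H ≤ l ^ 2) : symbol v H l δ k ≤ 3 * l := by
  have h_inner : ⟪v, k⟫ ^ 2 ≤ l ^ 2 := by
    have : |⟪v, k⟫| ≤ l :=
      (abs_real_inner_le_norm v k).trans (by nlinarith [norm_nonneg v, norm_nonneg k])
    simpa only [sq_abs] using pow_le_pow_left₀ (abs_nonneg _) this 2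
  have h_damp : δ ^ 2 * ‖k‖ ^ 2 * H ≤ l ^ 2 := by
    nlinarith [sq_nonneg δ, sq_nonneg ‖k‖]
  have h_sum : (1 / l) * (⟪v, k⟫ ^ 2 + δ ^ 2 * ‖k‖ ^ 2 * H) ≤ 2 * l := by
    rw [div_mul_eq_mul_div, one_mul, div_le_iff₀ hl]
    linarith
  unfold symbol
  linarith

lemma inv_six_mul_rpow_le_symbol_inv_mul (hv : ‖v‖ ≤ 1) (hH : 0 ≤ H) (hl : 0 < l) (hl1 : l ≤ 1)
    (hδ : δ ^ 2 ≤ 1) {ρ p : ℝ} (hρ1 : ρ ≤ 1) (hρH : ρ * H ≤ 1) {a : ℝ → ℝ}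
    (ha : ∀ r, 0 ≤ r → r < ρ → 2⁻¹ ≤ a r) (hp : p ≤ 0) (hk : k ∈ ball 0 (ρ * l) \ {0}) :
    (6 * l)⁻¹ * (ρ * l) ^ p ≤ (symbol v H l δ k)⁻¹ * (a ‖k‖ * ‖k‖ ^ p) := by
  obtain ⟨hkρ, hk0⟩ := hk
  rw [mem_ball_zero_iff] at hkρ
  have hk_pos : 0 < ‖k‖ := norm_pos_iff.mpr hk0
  have hρ0 : 0 < ρ := pos_of_mul_pos_left (hk_pos.trans hkρ) hl.le
  have h_kl : ‖k‖ ≤ l := hkρ.le.trans (mul_le_of_le_one_left hl.le hρ1)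
  have h_kH : ‖k‖ ^ 2 * H ≤ l ^ 2 := calc
    ‖k‖ ^ 2 * H ≤ (ρ * l) ^ 2 * H := by gcongr
    _ = ρ * (ρ * H) * l ^ 2 := by ring
    _ ≤ 1 * 1 * l ^ 2 := by gcongr
    _ = l ^ 2 := by ring
  have h_symb : (3 * l)⁻¹ ≤ (symbol v H l δ k)⁻¹ :=
    inv_anti₀ (symbol_pos hH hl) (symbol_le_three_mul hv hl hδ h_kl h_kH)
  have h_a : 2⁻¹ ≤ a ‖k‖ := ha _ hk_pos.le (hkρ.trans_le (mul_le_of_le_one_right hρ0.le hl1))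
  have h_rpow : (ρ * l) ^ p ≤ ‖k‖ ^ p := Real.rpow_le_rpow_of_nonpos hk_pos hkρ.le hp
  calc (6 * l)⁻¹ * (ρ * l) ^ p = (3 * l)⁻¹ * (2⁻¹ * (ρ * l) ^ p) := by ring
    _ ≤ (symbol v H l δ k)⁻¹ * (a ‖k‖ * ‖k‖ ^ p) :=
      mul_le_mul h_symb (mul_le_mul h_a h_rpow (by positivity) (by linarith)) (by positivity)
        (inv_nonneg.mpr (symbol_pos hH hl).le)

variable [MeasurableSpace E] [BorelSpace E] [FiniteDimensional ℝ E]

lemma integrable_symbol_inv_mul (μ : Measure E) [μ.IsAddHaarMeasure] (hE : 1 ≤ finrank ℝ E)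
    {β : ℝ} (hβ : β < finrank ℝ E) (hH : 0 ≤ H) (hl : 0 < l) {a : ℝ → ℝ} {M K : ℝ}
    (ha_meas : Measurable a) (ha_nonneg : ∀ r, 0 ≤ r → 0 ≤ a r)
    (ha_bdd : ∀ r, 0 ≤ r → a r ≤ M) (ha_supp : ∀ r, K < r → a r = 0) :
    Integrable (fun k ↦ (symbol v H l δ k)⁻¹ * (a ‖k‖ * ‖k‖ ^ (-β))) μ := by
  refine integrable_of_norm_le_rpow_of_eq_zero_of_lt μ hE (C := l⁻¹ * M) (R := K) hβ
    (fun k ↦ ?_) (fun k hk ↦ by simp [ha_supp _ hk]) (by unfold symbol; fun_prop)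
  have h_inv : (symbol v H l δ k)⁻¹ ≤ l⁻¹ := inv_anti₀ hl (le_symbol hH hl.le)
  have h_rpow := Real.rpow_nonneg (norm_nonneg k) (-β)
  rw [Real.norm_of_nonneg (symbol_inv_mul_nonneg hH hl ha_nonneg _), mul_assoc]
  exact mul_le_mul h_inv (mul_le_mul_of_nonneg_right (ha_bdd _ (norm_nonneg k)) h_rpow)
    (mul_nonneg (ha_nonneg _ (norm_nonneg k)) h_rpow) (inv_nonneg.mpr hl.le)

lemma mul_measureReal_ball_le_integral_symbol_inv_mul [Nontrivial E] (μ : Measure E)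
    [μ.IsAddHaarMeasure] {β : ℝ} (hβ0 : 0 ≤ β) (hβ : β < finrank ℝ E) (hv : ‖v‖ ≤ 1)
    (hH : 0 ≤ H) (hl : 0 < l) (hl1 : l ≤ 1) (hδ : δ ^ 2 ≤ 1) {ρ : ℝ} (hρ0 : 0 < ρ)
    (hρ1 : ρ ≤ 1) (hρH : ρ * H ≤ 1) {a : ℝ → ℝ} {M K : ℝ} (ha_meas : Measurable a)
    (ha_nonneg : ∀ r, 0 ≤ r → 0 ≤ a r) (ha_bdd : ∀ r, 0 ≤ r → a r ≤ M)
    (ha_supp : ∀ r, K < r → a r = 0) (ha_half : ∀ r, 0 ≤ r → r < ρ → 2⁻¹ ≤ a r) :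
    (6 * l)⁻¹ * (ρ * l) ^ (-β) * ((ρ * l) ^ finrank ℝ E * μ.real (ball 0 1)) ≤
      ∫ k, (symbol v H l δ k)⁻¹ * (a ‖k‖ * ‖k‖ ^ (-β)) ∂μ :=
  mul_measureReal_ball_le_integral μ
    (integrable_symbol_inv_mul μ finrank_pos hβ hH hl ha_meas ha_nonneg ha_bdd ha_supp)
    (fun _ ↦ symbol_inv_mul_nonneg hH hl ha_nonneg _) (mul_pos hρ0 hl) fun _ hk ↦
      inv_six_mul_rpow_le_symbol_inv_mul hv hH hl hl1 hδ hρ1 hρH ha_half (neg_nonpos.mpr hβ0) hk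

end Symbol

theorem stmt11_general (d : ℕ) (hd : 2 ≤ d) (α : ℝ) (hα1 : 1 / 2 < α) (hα2 : α < 1)
    (K : ℝ) (a : ℝ → ℝ)
    (ha_nonneg : ∀ r : ℝ, 0 ≤ r → 0 ≤ a r)
    (ha_bdd : ∃ M : ℝ, ∀ r : ℝ, 0 ≤ r → a r ≤ M)
    (ha_meas : Measurable a)
    (ha_supp : ∀ r : ℝ, K < r → a r = 0)
    (ha_cont : ContinuousAt a 0)
    (ha_one : a 0 = 1)
    (v : EuclideanSpace ℝ (Fin d)) (hv : ‖v‖ = 1)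
    (𝓗 : ℝ) (h𝓗 : 0 < 𝓗) :
    ∃ C > (0:ℝ), ∀ l ∈ Set.Ioc (0:ℝ) 1, ∀ δ ∈ Set.Ioc (0:ℝ) 1,
      C * l ^ (1 - 2 * α) ≤
        ∫ k : EuclideanSpace ℝ (Fin d),
          (l + (1 / l) * (⟪v, k⟫ ^ 2 + δ ^ 2 * ‖k‖ ^ 2 * 𝓗))⁻¹ *
            (a ‖k‖ * ‖k‖ ^ (-(2 * α + (d : ℝ) - 2))) := by
  obtain ⟨M, hM⟩ := ha_bdd
  have hdim : finrank ℝ (EuclideanSpace ℝ (Fin d)) = d := finrank_euclideanSpace_fin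
  have : Nontrivial (EuclideanSpace ℝ (Fin d)) :=
    nontrivial_of_finrank_pos (R := ℝ) (by omega)
  have hd' : (2 : ℝ) ≤ d := by exact_mod_cast hd
  have h_small : ∀ᶠ ρ in 𝓝[>] (0 : ℝ), ρ ≤ 1 ∧ ρ * 𝓗 ≤ 1 := nhdsWithin_le_nhds <|
    (eventually_le_nhds one_pos).and <| (continuous_mul_const 𝓗).tendsto' 0 0 (zero_mul 𝓗)
      |>.eventually (eventually_le_nhds one_pos)
  obtain ⟨ρ, ⟨ha_half, hρ1, hρH⟩, hρ0 : 0 < ρ⟩ :=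
    ((eventually_nhdsGT_forall_lt_le (c := 2⁻¹) ha_cont (by norm_num [ha_one])).and h_small).and
      eventually_mem_nhdsWithin |>.exists
  set B := volume.real (ball (0 : EuclideanSpace ℝ (Fin d)) 1)
  have hB : 0 < B := ENNReal.toReal_pos (measure_ball_pos _ _ one_pos).ne' measure_ball_lt_top.ne
  refine ⟨6⁻¹ * ρ ^ (2 - 2 * α) * B, by positivity, ?_⟩
  rintro l ⟨hl0, hl1⟩ δ ⟨hδ0, hδ1⟩
  calc 6⁻¹ * ρ ^ (2 - 2 * α) * B * l ^ (1 - 2 * α)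
      = (6 * l)⁻¹ * (ρ * l) ^ (-(2 * α + (d : ℝ) - 2)) * ((ρ * l) ^ d * B) := by
        rw [inv_mul_mul_rpow_mul_pow hρ0 hl0]
        ring_nf
    _ ≤ _ := by
      have := mul_measureReal_ball_le_integral_symbol_inv_mul volume
        (β := 2 * α + d - 2) (by linarith)
        (by rw [hdim]; linarith) hv.le h𝓗.le hl0 hl1 (pow_le_one₀ hδ0.le hδ1) hρ0 hρ1 hρH
        ha_meas ha_nonneg hM ha_supp ha_half
      rwa [hdim] at this

/-- Let `d ≥ 2`, `α ∈ (1/2, 1)`, `v ∈ ℝᵈ` with `|v| = 1`, `𝓗 > 0`, and let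
`a : [0,∞) → [0,∞)` be bounded measurable, vanishing beyond `K`, continuous at `0` with
`a(0) = 1`. Then there is `C > 0` such that for all `λ ∈ (0,1]` and `δ ∈ (0,1]`,
`∫_{ℝᵈ} (λ + (1/λ)[(v·k)² + δ²|k|²𝓗])⁻¹ a(|k|) |k|^{-(2α+d-2)} dk ≥ C λ^{1-2α}`. -/
theorem stmt11 (d : ℕ) (hd : 2 ≤ d) (α : ℝ) (hα1 : 1 / 2 < α) (hα2 : α < 1)
    (K : ℝ) (hK : 0 < K) (a : ℝ → ℝ)
    (ha_nonneg : ∀ r : ℝ, 0 ≤ r → 0 ≤ a r)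
    (ha_bdd : ∃ M : ℝ, ∀ r : ℝ, 0 ≤ r → a r ≤ M)
    (ha_meas : Measurable a)
    (ha_supp : ∀ r : ℝ, K < r → a r = 0)
    (ha_cont : ContinuousAt a 0)
    (ha_one : a 0 = 1)
    (v : EuclideanSpace ℝ (Fin d)) (hv : ‖v‖ = 1)
    (𝓗 : ℝ) (h𝓗 : 0 < 𝓗) :
    ∃ C > (0:ℝ), ∀ l ∈ Set.Ioc (0:ℝ) 1, ∀ δ ∈ Set.Ioc (0:ℝ) 1,
      C * l ^ (1 - 2 * α) ≤
        ∫ k : EuclideanSpace ℝ (Fin d),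
          (l + (1 / l) * (⟪v, k⟫ ^ 2 + δ ^ 2 * ‖k‖ ^ 2 * 𝓗))⁻¹ *
            (a ‖k‖ * ‖k‖ ^ (-(2 * α + (d : ℝ) - 2))) :=
  stmt11_general d hd α hα1 hα2 K a ha_nonneg ha_bdd ha_meas ha_supp ha_cont ha_one v hv 𝓗 h𝓗
end

section
/- Let n = 2e + 1 be odd and let ({1,…,n}, E, A, L) be a pairing structure with exactly one free index, A = {q}, and e pairs. Let K > 0. Then there exists a constant C > 0, depending only on n and K, such that for all λ ∈ (0,1], ∫_{[-K,K]^{A∪L}} Π_{j=1}^n (λ + |S_j|)^{-1} d(k_m)_{m∈A∪L} ≤ C λ^{-e} (1 + log(1/λ))^{e+1}. -/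
/-!
Every factor `(λ + |S_j|)⁻¹` with `j` neither in `L` nor the last index is at most `λ⁻¹`, and
there are exactly `e` of them. The pairs cancel in the last partial sum, so `S_n = k_q`. For
`m ∈ L`, the sum `S_m` is `k_m` plus a function of the `k_p` with `p < m`, while the earlier `S_p`
do not involve `k_m`. Integrating out the `k_m`, `m ∈ L`, in decreasing order thus yields each
time a factor `∫_{-K}^{K} (λ + |t + c|)⁻¹ dt ≤ 2 log(1 + 2K/λ)`, and so does the last integral,
over `k_q`. Finally `log(1 + 2K/λ) ≤ (1 + log(1 + 2K)) (1 + log(1/λ))` for `λ ≤ 1`.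
-/

open MeasureTheory

/-- A pairing structure on `{1, …, n}` is encoded by an involution `σ` of `Fin n`:
the free indices `A` are the fixed points, the set of left endpoints `L` is
`{j | j < σ j}`, and `(p, σ p)` with `p < σ p` are the pairs.  Given values
`kA` on `A` and `kL` on `L`, `combine σ hσ kA kL : Fin n → ℝ` is the vector `k̃` with
`k̃_j = kA_j` for `j ∈ A`, `k̃_j = kL_j` for `j ∈ L`, and `k̃_q = -kL_p` when `q = σ p`,
`p < q`. -/
noncomputable def combine {n : ℕ} (σ : Equiv.Perm (Fin n)) (hσ : ∀ j, σ (σ j) = j)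
    (kA : {j : Fin n // σ j = j} → ℝ) (kL : {j : Fin n // j < σ j} → ℝ) :
    Fin n → ℝ := fun j =>
  if h : σ j = j then kA ⟨j, h⟩
  else if h' : j < σ j then kL ⟨j, h'⟩
  else -kL ⟨σ j, by
    have h2 : σ j < j := lt_of_le_of_ne (not_lt.mp h') h
    rw [hσ j]; exact h2⟩

/-- The partial sums `S_j = k̃_1 + ⋯ + k̃_j`. -/
noncomputable def partialSum {n : ℕ} (k : Fin n → ℝ) (j : Fin n) : ℝ :=
  ∑ i ∈ Finset.Iic j, k i

open Finset Function intervalIntegral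
open scoped ENNReal

theorem integral_inv_add_abs_le_of_nonneg {l M α β : ℝ} (hl : 0 < l) (hα : 0 ≤ α)
    (hαβ : α ≤ β) (hM : β - α ≤ M) :
    ∫ u in α..β, (l + |u|)⁻¹ ≤ Real.log (1 + M / l) := by
  have habs : ∫ u in α..β, (l + |u|)⁻¹ = ∫ u in α..β, (l + u)⁻¹ :=
    integral_congr fun u hu => by
      rw [Set.uIcc_of_le hαβ] at hu
      simp only [abs_of_nonneg (hα.trans hu.1)]
  have hzero : (0 : ℝ) ∉ Set.uIcc (l + α) (l + β) := by
    rw [Set.uIcc_of_le (by linarith)]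
    exact fun h => by linarith [h.1]
  rw [habs, integral_comp_add_left (fun u => u⁻¹), integral_inv hzero]
  have hlα : 0 < l + α := by linarith
  gcongr
  · exact div_pos (by linarith) hlα
  · have hMl : l * (M / l) = M := mul_div_cancel₀ M hl.ne'
    have hMl0 : 0 ≤ M / l := div_nonneg (by linarith) hl.le
    rw [div_le_iff₀ hlα]
    nlinarith

theorem integral_inv_add_abs_le_of_nonpos {l M α β : ℝ} (hl : 0 < l) (hβ : β ≤ 0)
    (hαβ : α ≤ β) (hM : β - α ≤ M) :
    ∫ u in α..β, (l + |u|)⁻¹ ≤ Real.log (1 + M / l) := by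
  have hreflect := integral_comp_neg (a := α) (b := β) fun u => (l + |u|)⁻¹
  simp only [abs_neg] at hreflect
  rw [hreflect]
  exact integral_inv_add_abs_le_of_nonneg hl (neg_nonneg.2 hβ) (neg_le_neg hαβ) (by linarith)

theorem integral_inv_add_abs_le {l M a b : ℝ} (hl : 0 < l) (hab : a ≤ b) (hM : b - a ≤ M) :
    ∫ u in a..b, (l + |u|)⁻¹ ≤ 2 * Real.log (1 + M / l) := by
  have hlog : 0 ≤ Real.log (1 + M / l) :=
    Real.log_nonneg (le_add_of_nonneg_right (div_nonneg ((sub_nonneg.2 hab).trans hM) hl.le))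
  rcases le_total 0 a with ha | ha
  · linarith [integral_inv_add_abs_le_of_nonneg hl ha hab hM]
  rcases le_total b 0 with hb | hb
  · linarith [integral_inv_add_abs_le_of_nonpos hl hb hab hM]
  have hcont : Continuous fun u : ℝ => (l + |u|)⁻¹ :=
    (continuous_const.add continuous_abs).inv₀ fun u =>
      (add_pos_of_pos_of_nonneg hl (abs_nonneg u)).ne'
  rw [← integral_add_adjacent_intervals (hcont.intervalIntegrable a 0)
    (hcont.intervalIntegrable 0 b)]
  linarith [integral_inv_add_abs_le_of_nonpos hl le_rfl ha (by linarith : 0 - a ≤ M),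
    integral_inv_add_abs_le_of_nonneg hl le_rfl hb (by linarith : b - 0 ≤ M)]

theorem lintegral_inv_add_abs_add_le {l a b : ℝ} (hl : 0 < l) (hab : a ≤ b) (c : ℝ) :
    ∫⁻ t in Set.Icc a b, ENNReal.ofReal (l + |t + c|)⁻¹ ≤
      ENNReal.ofReal (2 * Real.log (1 + (b - a) / l)) := by
  have hcont : Continuous fun t : ℝ => (l + |t + c|)⁻¹ :=
    (continuous_const.add (continuous_add_const c).abs).inv₀ fun t =>
      (add_pos_of_pos_of_nonneg hl (abs_nonneg _)).ne'
  rw [← ofReal_integral_eq_lintegral_ofReal hcont.integrableOn_Icc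
    (Filter.Eventually.of_forall fun t => by positivity), integral_Icc_eq_integral_Ioc,
    ← integral_of_le hab, integral_comp_add_right (fun u => (l + |u|)⁻¹)]
  exact ENNReal.ofReal_le_ofReal (integral_inv_add_abs_le hl (by linarith) (by linarith))

theorem log_one_add_div_le {K l : ℝ} (hK : 0 ≤ K) (hl : 0 < l) (hl1 : l ≤ 1) :
    Real.log (1 + K / l) ≤ (1 + Real.log (1 + K)) * (1 + Real.log (1 / l)) := by
  have hK' : 0 ≤ Real.log (1 + K) := Real.log_nonneg (by linarith)
  have hl' : 0 ≤ Real.log (1 / l) := Real.log_nonneg (by rw [le_div_iff₀ hl]; linarith)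
  have hsplit : Real.log ((1 + K) / l) = Real.log (1 + K) + Real.log (1 / l) := by
    rw [div_eq_mul_one_div, Real.log_mul (by positivity) (by positivity)]
  have hmono : Real.log (1 + K / l) ≤ Real.log ((1 + K) / l) := by
    gcongr
    rw [add_div]
    gcongr
    exact one_le_one_div hl hl1
  nlinarith

theorem lintegral_prod_comp_triangular_le {ι : Type*} [Fintype ι] [LinearOrder ι]
    (μ : Measure ℝ) [SigmaFinite μ] {g : ℝ → ℝ≥0∞} (hg : Measurable g) {B : ℝ≥0∞}
    (hB : ∀ c, ∫⁻ t, g (t + c) ∂μ ≤ B)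
    (S : ι → (ι → ℝ) → ℝ) (hS : ∀ m, Measurable (S m))
    (hS_self : ∀ m k t, S m (update k m t) = S m k + (t - k m))
    (hS_lt : ∀ m' m, m' < m → ∀ k t, S m' (update k m t) = S m' k) :
    ∫⁻ k, ∏ m, g (S m k) ∂(Measure.pi fun _ => μ) ≤ B ^ Fintype.card ι := by
  suffices h : ∀ s : Finset ι, ∀ x,
      (∫⋯∫⁻_s, fun k => ∏ m ∈ s, g (S m k) ∂fun _ => μ) x ≤ B ^ s.card by
    simpa using h univ 0
  intro s
  induction s using Finset.induction_on_max with
  | empty => simp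
  | insert a s has ih =>
    have ha : a ∉ s := fun h => lt_irrefl a (has a h)
    have hmeas : Measurable fun k => ∏ m ∈ insert a s, g (S m k) :=
      Finset.measurable_prod _ fun m _ => hg.comp (hS m)
    have hinner : ∀ y, ∫⁻ t, ∏ m ∈ insert a s, g (S m (update y a t)) ∂μ
        ≤ (∏ m ∈ s, g (S m y)) * B := fun y => by
      have hrest : ∀ t, ∏ m ∈ s, g (S m (update y a t)) = ∏ m ∈ s, g (S m y) := fun t =>
        prod_congr rfl fun m hm => by rw [hS_lt m a (has m hm)]
      have hshift : ∀ t, S a y + (t - y a) = t + (S a y - y a) := fun t => by ring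
      simp_rw [prod_insert ha, hrest, hS_self, hshift]
      have hshifted : Measurable fun t => g (t + (S a y - y a)) := hg.comp (measurable_add_const _)
      rw [lintegral_mul_const _ hshifted, mul_comm]
      exact mul_le_mul_right (hB _) _
    intro x
    rw [lmarginal_insert' _ hmeas ha]
    calc _ ≤ (∫⋯∫⁻_s, fun y => (∏ m ∈ s, g (S m y)) * B ∂fun _ => μ) x :=
          lmarginal_mono hinner x
      _ = (∫⋯∫⁻_s, fun k => ∏ m ∈ s, g (S m k) ∂fun _ => μ) x * B :=
          lintegral_mul_const _
            ((Finset.measurable_prod _ fun m _ => hg.comp (hS m)).comp measurable_updateFinset)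
      _ ≤ B ^ s.card * B := mul_le_mul_left (ih x) B
      _ = B ^ (insert a s).card := by rw [card_insert_of_notMem ha, pow_succ]

theorem two_mul_card_lt_add_card_fixed {α : Type*} [Fintype α] [LinearOrder α]
    {σ : Equiv.Perm α} (hσ : Involutive σ) :
    2 * Fintype.card {j // j < σ j} + Fintype.card {j // σ j = j} = Fintype.card α := by
  have hswap : Fintype.card {j // j < σ j} = Fintype.card {j // σ j < j} :=
    Fintype.card_congr (σ.subtypeEquiv fun j => by rw [hσ j])
  rw [two_mul]
  nth_rw 2 [hswap]
  simp only [Fintype.card_subtype, card_filter, ← sum_add_distrib]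
  rw [← card_univ, card_eq_sum_ones]
  refine sum_congr rfl fun j _ => ?_
  rcases lt_trichotomy j (σ j) with h | h | h
  · simp [h, h.ne', h.not_gt]
  · simp [← h]
  · simp [h, h.ne, h.not_gt]

section PairingStructure

variable {n : ℕ} {σ : Equiv.Perm (Fin n)} (hσ : ∀ j, σ (σ j) = j)
  (kA : {j : Fin n // σ j = j} → ℝ) (kL : {j : Fin n // j < σ j} → ℝ)

theorem combine_of_fixed {j : Fin n} (h : σ j = j) : combine σ hσ kA kL j = kA ⟨j, h⟩ :=
  dif_pos h

theorem combine_of_lt {j : Fin n} (h : j < σ j) : combine σ hσ kA kL j = kL ⟨j, h⟩ := by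
  rw [combine, dif_neg h.ne', dif_pos h]

theorem combine_of_gt {j : Fin n} (h : σ j < j) :
    combine σ hσ kA kL j = -kL ⟨σ j, by rwa [hσ]⟩ := by
  rw [combine, dif_neg h.ne, dif_neg h.not_gt]

theorem combine_add_combine_apply_of_lt {j : Fin n} (h : j < σ j) :
    combine σ hσ kA kL j + combine σ hσ kA kL (σ j) = 0 := by
  rw [combine_of_lt hσ kA kL h, combine_of_gt hσ kA kL (by rwa [hσ]), add_neg_eq_zero]
  simp only [hσ]

theorem combine_add_combine_apply_of_ne {j : Fin n} (h : σ j ≠ j) :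
    combine σ hσ kA kL j + combine σ hσ kA kL (σ j) = 0 := by
  rcases h.lt_or_gt with h | h
  · have := combine_add_combine_apply_of_lt hσ kA kL (j := σ j) (by rwa [hσ])
    rwa [hσ, add_comm] at this
  · exact combine_add_combine_apply_of_lt hσ kA kL h

theorem sum_combine : ∑ j, combine σ hσ kA kL j = ∑ a, kA a := by
  rw [← sum_filter_add_sum_filter_not univ fun j => σ j = j]
  have hpairs : ∑ j ∈ univ.filter (fun j => σ j ≠ j), combine σ hσ kA kL j = 0 :=
    sum_involution (fun j _ => σ j)
      (fun j hj => combine_add_combine_apply_of_ne hσ kA kL (mem_filter.1 hj).2)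
      (fun j hj _ => (mem_filter.1 hj).2)
      (fun j hj => mem_filter.2 ⟨mem_univ _, by simpa [hσ, eq_comm] using (mem_filter.1 hj).2⟩)
      (fun j _ => hσ j)
  rw [hpairs, add_zero, sum_subtype (p := fun j => σ j = j) _ fun j => by simp]
  exact sum_congr rfl fun a _ => combine_of_fixed hσ kA kL a.2

theorem measurable_combine_apply (i : Fin n) :
    Measurable fun kL => combine σ hσ kA kL i := by
  unfold combine
  split_ifs
  · exact measurable_const
  · exact measurable_pi_apply _
  · exact (measurable_pi_apply _).neg

theorem combine_update_of_ne (m : {j : Fin n // j < σ j}) (t : ℝ) {i : Fin n}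
    (him : i ≠ m) (hiσm : i ≠ σ m) :
    combine σ hσ kA (update kL m t) i = combine σ hσ kA kL i := by
  rcases lt_trichotomy i (σ i) with h | h | h
  · rw [combine_of_lt hσ kA _ h, combine_of_lt hσ kA _ h,
      update_of_ne fun hc => him (congrArg Subtype.val hc)]
  · rw [combine_of_fixed hσ kA _ h.symm, combine_of_fixed hσ kA _ h.symm]
  · rw [combine_of_gt hσ kA _ h, combine_of_gt hσ kA _ h,
      update_of_ne fun hc => hiσm (by rw [← congrArg Subtype.val hc, hσ])]

theorem combine_update_self (m : {j : Fin n // j < σ j}) (t : ℝ) :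
    combine σ hσ kA (update kL m t) m = t := by
  rw [combine_of_lt hσ kA _ m.2, update_self]

theorem partialSum_combine_update_self (m : {j : Fin n // j < σ j}) (t : ℝ) :
    partialSum (combine σ hσ kA (update kL m t)) m
      = partialSum (combine σ hσ kA kL) m + (t - kL m) := by
  have hm : (m : Fin n) ∈ Iic (m : Fin n) := mem_Iic.2 le_rfl
  rw [partialSum, partialSum, ← add_sum_erase _ _ hm, ← add_sum_erase _ _ hm,
    combine_update_self, combine_of_lt hσ kA kL m.2]
  have hrest : ∑ i ∈ (Iic (m : Fin n)).erase m, combine σ hσ kA (update kL m t) i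
      = ∑ i ∈ (Iic (m : Fin n)).erase m, combine σ hσ kA kL i :=
    sum_congr rfl fun _ hi => by
      have hi' := mem_erase.1 hi
      exact combine_update_of_ne hσ kA kL m t hi'.1
        ((mem_Iic.1 hi'.2).trans_lt m.2).ne
  rw [hrest]
  ring

theorem partialSum_combine_update_of_lt (m : {j : Fin n // j < σ j}) (t : ℝ) {j : Fin n}
    (hj : j < m) :
    partialSum (combine σ hσ kA (update kL m t)) j = partialSum (combine σ hσ kA kL) j :=
  sum_congr rfl fun _ hi =>
    combine_update_of_ne hσ kA kL m t ((mem_Iic.1 hi).trans_lt hj).ne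
      ((mem_Iic.1 hi).trans_lt (hj.trans m.2)).ne

end PairingStructure

theorem partialSum_last {n : ℕ} (k : Fin (n + 1) → ℝ) : partialSum k (Fin.last n) = ∑ j, k j := by
  rw [partialSum]
  exact sum_congr (by ext; simp [Fin.le_last]) fun _ _ => rfl

section PairingStructureBounds

variable {n : ℕ} {σ : Equiv.Perm (Fin (n + 1))} (hσ : ∀ j, σ (σ j) = j)
  (kA : {j : Fin (n + 1) // σ j = j} → ℝ)

theorem prod_partialSum_combine_le (kL : {j : Fin (n + 1) // j < σ j} → ℝ) {g : ℝ → ℝ≥0∞}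
    {c : ℝ≥0∞} (hgc : ∀ x, g x ≤ c) :
    ∏ j, g (partialSum (combine σ hσ kA kL) j) ≤
      c ^ (n - Fintype.card {j // j < σ j}) *
        (g (∑ a, kA a) * ∏ m : {j // j < σ j}, g (partialSum (combine σ hσ kA kL) m)) := by
  set L := univ.filter fun j : Fin (n + 1) => j < σ j
  have hlast : Fin.last n ∉ L := by simp [L, Fin.le_last]
  have hcard : #(insert (Fin.last n) L)ᶜ = n - Fintype.card {j // j < σ j} := by
    rw [card_compl, card_insert_of_notMem hlast, Fintype.card_fin, Fintype.card_subtype,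
      Nat.add_sub_add_right]
  rw [← prod_mul_prod_compl (insert (Fin.last n) L), mul_comm, prod_insert hlast,
    partialSum_last, sum_combine, prod_subtype (p := fun j => j < σ j) L fun j => by simp [L]]
  gcongr
  exact hcard ▸ prod_le_pow_card _ _ _ fun j _ => hgc _

theorem lintegral_prod_partialSum_combine_le (μ : Measure ℝ) [SigmaFinite μ] {g : ℝ → ℝ≥0∞}
    (hg : Measurable g) {B c : ℝ≥0∞} (hB : ∀ c, ∫⁻ t, g (t + c) ∂μ ≤ B) (hgc : ∀ x, g x ≤ c) :
    ∫⁻ kL, ∏ j, g (partialSum (combine σ hσ kA kL) j) ∂(Measure.pi fun _ => μ) ≤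
      c ^ (n - Fintype.card {j // j < σ j}) * g (∑ a, kA a) *
        B ^ Fintype.card {j // j < σ j} := by
  set C := c ^ (n - Fintype.card {j // j < σ j}) * g (∑ a, kA a)
  have hS : ∀ m : {j // j < σ j}, Measurable fun kL => partialSum (combine σ hσ kA kL) m :=
    fun m => Finset.measurable_sum _ fun i _ => measurable_combine_apply hσ kA i
  calc _ ≤ ∫⁻ kL, C * ∏ m : {j // j < σ j}, g (partialSum (combine σ hσ kA kL) m)
        ∂(Measure.pi fun _ => μ) :=
        lintegral_mono fun kL =>
          (prod_partialSum_combine_le hσ kA kL hgc).trans_eq (mul_assoc ..).symm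
    _ = C * ∫⁻ kL, ∏ m : {j // j < σ j}, g (partialSum (combine σ hσ kA kL) m)
        ∂(Measure.pi fun _ => μ) :=
        lintegral_const_mul _ (Finset.measurable_prod _ fun m _ => hg.comp (hS m))
    _ ≤ C * B ^ Fintype.card {j // j < σ j} := by
        gcongr
        exact lintegral_prod_comp_triangular_le μ hg hB _ hS
          (fun m kL t => partialSum_combine_update_self hσ kA kL m t)
          fun _ m hlt kL t => partialSum_combine_update_of_lt hσ kA kL m t hlt

theorem lintegral_lintegral_prod_partialSum_combine_le
    (hfree : Fintype.card {j : Fin (n + 1) // σ j = j} = 1) (μ : Measure ℝ) [SigmaFinite μ]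
    {g : ℝ → ℝ≥0∞} (hg : Measurable g) {B c : ℝ≥0∞} (hB : ∀ c, ∫⁻ t, g (t + c) ∂μ ≤ B)
    (hgc : ∀ x, g x ≤ c) :
    ∫⁻ kA, ∫⁻ kL, ∏ j, g (partialSum (combine σ hσ kA kL) j)
        ∂(Measure.pi fun _ => μ) ∂(Measure.pi fun _ => μ) ≤
      c ^ (n - Fintype.card {j // j < σ j}) * B ^ (Fintype.card {j // j < σ j} + 1) := by
  obtain ⟨_⟩ := Fintype.card_eq_one_iff_nonempty_unique.mp hfree
  set C := c ^ (n - Fintype.card {j // j < σ j}) * B ^ Fintype.card {j // j < σ j}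
  calc _ ≤ ∫⁻ kA, C * g (kA default) ∂(Measure.pi fun _ => μ) := lintegral_mono fun kA =>
        (lintegral_prod_partialSum_combine_le hσ kA μ hg hB hgc).trans_eq
          (by rw [Fintype.sum_unique]; ring)
    _ = C * ∫⁻ t, g t ∂μ := by
        rw [lintegral_const_mul _ (by fun_prop)]
        congr 1
        -- `convert` identifies the `Fintype` instance of `Unique` with that of the subtype
        convert (measurePreserving_funUnique μ {j // σ j = j}).lintegral_comp_emb
          (MeasurableEquiv.measurableEmbedding _) g using 3
        rfl
    _ ≤ C * B := by gcongr; simpa using hB 0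
    _ = _ := by rw [mul_assoc, ← pow_succ]

end PairingStructureBounds

theorem ofReal_inv_pow_mul_ofReal_log_pow_le {K l : ℝ} (hK : 0 ≤ K) (hl : 0 < l) (hl1 : l ≤ 1)
    (e : ℕ) :
    ENNReal.ofReal l⁻¹ ^ e * ENNReal.ofReal (2 * Real.log (1 + 2 * K / l)) ^ (e + 1) ≤
      ENNReal.ofReal ((2 * (1 + Real.log (1 + 2 * K))) ^ (e + 1) * (l ^ e)⁻¹ *
        (1 + Real.log (1 / l)) ^ (e + 1)) := by
  have hlog : 0 ≤ Real.log (1 + 2 * K / l) :=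
    Real.log_nonneg (le_add_of_nonneg_right (by positivity))
  rw [← ENNReal.ofReal_pow (inv_nonneg.2 hl.le), ← ENNReal.ofReal_pow (by positivity),
    ← ENNReal.ofReal_mul (by positivity)]
  refine ENNReal.ofReal_le_ofReal ?_
  have hB : 2 * Real.log (1 + 2 * K / l) ≤
      2 * (1 + Real.log (1 + 2 * K)) * (1 + Real.log (1 / l)) := by
    linarith [log_one_add_div_le (by positivity : 0 ≤ 2 * K) hl hl1]
  calc l⁻¹ ^ e * (2 * Real.log (1 + 2 * K / l)) ^ (e + 1)
      ≤ l⁻¹ ^ e * (2 * (1 + Real.log (1 + 2 * K)) * (1 + Real.log (1 / l))) ^ (e + 1) := by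
        gcongr
    _ = _ := by rw [mul_pow, inv_pow]; ring

/-- Let `n = 2e + 1` be odd and let a pairing structure on `{1,…,n}` with
exactly one free index and `e` pairs be given; let `K > 0`. Then there is a constant
`C > 0`, depending only on `n` and `K`, such that for all `λ ∈ (0,1]`,
`∫_{[-K,K]^{A∪L}} Π_{j=1}^n (λ+|S_j|)⁻¹ d(k_m)_{m∈A∪L} ≤ C λ^{-e} (1 + log(1/λ))^{e+1}`. -/
theorem stmt18 (e n : ℕ) (hn : n = 2 * e + 1)
    (σ : Equiv.Perm (Fin n)) (hσ : ∀ j, σ (σ j) = j)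
    (hfree : Fintype.card {j : Fin n // σ j = j} = 1)
    (K : ℝ) (hK : 0 < K) :
    ∃ C > (0:ℝ), ∀ l ∈ Set.Ioc (0:ℝ) 1,
      ∫⁻ kA : {j : Fin n // σ j = j} → ℝ in
          Set.univ.pi (fun _ => Set.Icc (-K) K),
        ∫⁻ kL : {j : Fin n // j < σ j} → ℝ in
            Set.univ.pi (fun _ => Set.Icc (-K) K),
          ENNReal.ofReal
            (∏ j : Fin n, (l + |partialSum (combine σ hσ kA kL) j|)⁻¹)
      ≤ ENNReal.ofReal (C * (l ^ e)⁻¹ * (1 + Real.log (1 / l)) ^ (e + 1)) := by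
  subst hn
  have hL : Fintype.card {j // j < σ j} = e := by
    have := two_mul_card_lt_add_card_fixed (σ := σ) hσ
    rw [hfree, Fintype.card_fin] at this
    omega
  have hlogK : 0 ≤ Real.log (1 + 2 * K) := Real.log_nonneg (by linarith)
  refine ⟨(2 * (1 + Real.log (1 + 2 * K))) ^ (e + 1), by positivity, fun l ⟨hl, hl1⟩ => ?_⟩
  have hB : ∀ c, ∫⁻ t in Set.Icc (-K) K, ENNReal.ofReal (l + |t + c|)⁻¹ ≤
      ENNReal.ofReal (2 * Real.log (1 + 2 * K / l)) := fun c => by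
    simpa only [sub_neg_eq_add, ← two_mul] using
      lintegral_inv_add_abs_add_le hl (neg_le_self hK.le) c
  have hgc : ∀ x, ENNReal.ofReal (l + |x|)⁻¹ ≤ ENNReal.ofReal l⁻¹ := fun x =>
    ENNReal.ofReal_le_ofReal (inv_anti₀ hl (le_add_of_nonneg_right (abs_nonneg x)))
  simp_rw [volume_pi, Measure.restrict_pi_pi,
    ENNReal.ofReal_prod_of_nonneg fun j _ => inv_nonneg.2 (add_nonneg hl.le (abs_nonneg _))]
  calc _ ≤ ENNReal.ofReal l⁻¹ ^ e * ENNReal.ofReal (2 * Real.log (1 + 2 * K / l)) ^ (e + 1) :=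
        (lintegral_lintegral_prod_partialSum_combine_le hσ hfree _ (by fun_prop) hB hgc).trans_eq
          (by rw [hL, Nat.sub_eq_of_eq_add (two_mul e)])
    _ ≤ _ := ofReal_inv_pow_mul_ofReal_log_pow_le hK.le hl hl1 e
end
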